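/- For every even integer r ≥ 4, the Lambert series identity ∑_{n=1}^∞ μ_r(n)·x^n/(1 − x^n) = ∑_{n ∈ M_r} x^n holds as an identity of formal power series, where M_r is the set of positive integers all of whose prime exponents are even and strictly less than r; equivalently, for every positive integer N, ∑_{d ∣ N} μ_r(d) equals 1 if N ∈ M_r and 0 otherwise. -/
import Mathlib


open scoped Classical

/-- The Möbius function of rank `r`:  `μ_r(n) = (-1)^Ω(n)` if `n` is `r`-free
(no prime `p` has `p^r ∣ n`), and `0` otherwise. -/
noncomputable def muR (r n : ℕ) : ℤ :=
  if ∀ p : ℕ, p.Prime → ¬ p ^ r ∣ n then (-1) ^ (ArithmeticFunction.cardFactors n) else 0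

lemma muR_zero (r : ℕ) : muR r 0 = 0 := by
  have : ¬ ∀ p : ℕ, p.Prime → ¬ p ^ r ∣ 0 := by
    push_neg
    exact ⟨2, Nat.prime_two, dvd_zero _⟩
  rw [muR, if_neg this]

lemma muR_one (r : ℕ) (hr : 1 ≤ r) : muR r 1 = 1 := by
  have : ∀ p : ℕ, p.Prime → ¬ p ^ r ∣ 1 := by
    intro p hp hd
    have := Nat.le_of_dvd one_pos hd
    have h2 : 2 ≤ p := hp.two_le
    have : 2 ≤ p ^ r := le_trans h2 (Nat.le_self_pow (by omega) p)
    omega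
  rw [muR, if_pos this]
  simp

lemma muR_prime_pow (r p j : ℕ) (hr : 1 ≤ r) (hp : p.Prime) :
    muR r (p ^ j) = if j < r then (-1) ^ j else 0 := by
  have hfree : (∀ q : ℕ, q.Prime → ¬ q ^ r ∣ p ^ j) ↔ j < r := by
    constructor
    · intro h
      by_contra hc
      push_neg at hc
      exact h p hp (pow_dvd_pow p hc)
    · intro hjr q hq hd
      have hq_dvd : q ∣ p ^ j := dvd_trans (dvd_pow_self q (by omega)) hd
      have hqp : q = p := (Nat.prime_dvd_prime_iff_eq hq hp).mp (hq.dvd_of_dvd_pow hq_dvd)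
      subst hqp
      rw [Nat.pow_dvd_pow_iff_le_right hq.one_lt] at hd
      omega
  rw [muR, ArithmeticFunction.cardFactors_apply_prime_pow hp]
  simp [hfree]

lemma muR_sum_prime_pow (r p k : ℕ) (hr : 1 ≤ r) (heven : Even r) (hp : p.Prime) :
    (∑ d ∈ (p ^ k).divisors, muR r d) = if Even k ∧ k < r then 1 else 0 := by
  rw [Nat.sum_divisors_prime_pow hp]
  have : ∀ j ∈ Finset.range (k + 1), muR r (p ^ j) = if j < r then (-1) ^ j else 0 :=
    fun j _ => muR_prime_pow r p j hr hp
  rw [Finset.sum_congr rfl this]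
  by_cases hk : k < r
  · have : ∀ j ∈ Finset.range (k + 1), (if j < r then ((-1:ℤ)) ^ j else 0) = (-1) ^ j := by
      intro j hj
      rw [Finset.mem_range] at hj
      rw [if_pos (by omega)]
    rw [Finset.sum_congr rfl this, neg_one_geom_sum]
    rcases Nat.even_or_odd k with he | ho
    · rw [if_neg (by simp [Nat.even_add_one, he]), if_pos ⟨he, hk⟩]
    · rw [if_pos (Nat.even_add_one.mpr (Nat.not_even_iff_odd.mpr ho)),
        if_neg (by simp [Nat.not_even_iff_odd.mpr ho])]
  · rw [← Finset.sum_filter]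
    have hfil : (Finset.range (k + 1)).filter (· < r) = Finset.range r := by
      ext j; simp only [Finset.mem_filter, Finset.mem_range]; omega
    rw [hfil, neg_one_geom_sum, if_pos heven, if_neg (by tauto)]

lemma muR_mult (r : ℕ) (hr : 1 ≤ r) {m n : ℕ} (h : Nat.Coprime m n) :
    muR r (m * n) = muR r m * muR r n := by
  rcases eq_or_ne m 0 with rfl | hm0
  · have : n = 1 := by simpa [Nat.coprime_zero_left] using h
    subst this
    simp [muR_zero, muR_one r hr]
  rcases eq_or_ne n 0 with rfl | hn0
  · have : m = 1 := by simpa [Nat.coprime_zero_right] using h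
    subst this
    simp [muR_zero, muR_one r hr]
  have key : (∀ p : ℕ, p.Prime → ¬ p ^ r ∣ m * n) ↔
      (∀ p : ℕ, p.Prime → ¬ p ^ r ∣ m) ∧ (∀ p : ℕ, p.Prime → ¬ p ^ r ∣ n) := by
    constructor
    · intro h'
      exact ⟨fun p hp hd => h' p hp (hd.mul_right n), fun p hp hd => h' p hp (hd.mul_left m)⟩
    · rintro ⟨h1, h2⟩ p hp hd
      rw [hp.pow_dvd_iff_le_factorization (mul_ne_zero hm0 hn0),
        Nat.factorization_mul hm0 hn0] at hd
      simp only [Finsupp.add_apply] at hd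
      by_cases hpm : p ∣ m
      · have hpn : ¬ p ∣ n := fun hpn =>
          hp.one_lt.ne' (Nat.eq_one_of_dvd_coprimes h hpm hpn)
        have : n.factorization p = 0 := Nat.factorization_eq_zero_of_not_dvd hpn
        exact h1 p hp ((hp.pow_dvd_iff_le_factorization hm0).mpr (by omega))
      · have : m.factorization p = 0 := Nat.factorization_eq_zero_of_not_dvd hpm
        exact h2 p hp ((hp.pow_dvd_iff_le_factorization hn0).mpr (by omega))
  unfold muR
  rw [key]
  by_cases h1 : ∀ p : ℕ, p.Prime → ¬ p ^ r ∣ m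
  · by_cases h2 : ∀ p : ℕ, p.Prime → ¬ p ^ r ∣ n
    · rw [if_pos ⟨h1, h2⟩, if_pos h1, if_pos h2,
        ArithmeticFunction.cardFactors_mul hm0 hn0, pow_add]
    · simp [h1, h2]
  · simp [h1]

noncomputable def FmuR (r : ℕ) : ArithmeticFunction ℤ := ⟨muR r, muR_zero r⟩


/-- Lambert series identity for even rank `r ≥ 4` (stated coefficientwise):
for every positive integer `N`, the coefficient `∑_{d ∣ N} μ_r(d)` of `x^N` in
`∑ μ_r(n)·x^n/(1-x^n)` equals `1` if `N ∈ M_r` (all prime exponents of `N` are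
even and `< r`) and `0` otherwise. -/
theorem muR_lambert_series_even (r : ℕ) (hr : 4 ≤ r) (heven : Even r)
    (N : ℕ) (hN : 0 < N) :
    (∑ d ∈ N.divisors, muR r d) =
      if ∀ p : ℕ, p.Prime → p ∣ N →
          Even (N.factorization p) ∧ N.factorization p < r
      then 1 else 0 := by
  have hr1 : 1 ≤ r := by omega
  have hNe : N ≠ 0 := hN.ne'
  have hFm : (FmuR r).IsMultiplicative :=
    ⟨muR_one r hr1, fun h => muR_mult r hr1 h⟩
  have hmul : ((FmuR r) * ArithmeticFunction.zeta).IsMultiplicative :=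
    hFm.mul ArithmeticFunction.isMultiplicative_zeta.natCast
  have happ : ∀ M : ℕ, ((FmuR r) * ArithmeticFunction.zeta) M = ∑ d ∈ M.divisors, muR r d :=
    fun M => ArithmeticFunction.coe_mul_zeta_apply
  rw [← happ, hmul.multiplicative_factorization _ hNe]
  have hpk : ∀ p ∈ N.factorization.support,
      ((FmuR r) * ArithmeticFunction.zeta) (p ^ N.factorization p) =
      if Even (N.factorization p) ∧ N.factorization p < r then 1 else 0 := by
    intro p hp
    have hpp : p.Prime := Nat.prime_of_mem_primeFactors (by rwa [Nat.support_factorization] at hp)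
    rw [happ, muR_sum_prime_pow r p _ hr1 heven hpp]
  rw [Finsupp.prod_congr (g2 := fun p k => if Even k ∧ k < r then (1:ℤ) else 0) hpk]
  by_cases H : ∀ p : ℕ, p.Prime → p ∣ N → Even (N.factorization p) ∧ N.factorization p < r
  · rw [if_pos H]
    apply Finset.prod_eq_one
    intro p hp
    rw [Nat.support_factorization] at hp
    exact if_pos (H p (Nat.prime_of_mem_primeFactors hp) (Nat.dvd_of_mem_primeFactors hp))
  · rw [if_neg H]
    push_neg at H
    obtain ⟨p, hpp, hpd, hcond⟩ := H
    have hps : p ∈ N.factorization.support := by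
      rw [Nat.support_factorization, Nat.mem_primeFactors]
      exact ⟨hpp, hpd, hNe⟩
    refine Finset.prod_eq_zero hps ?_
    refine if_neg ?_
    rintro ⟨h1, h2⟩
    have := hcond h1
    omega
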